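/- For any skip-free GKAT expression e, the GKAT language semantics and the skip-free language semantics are related by L̂(e) = L(e)·At. -/
import Mathlib


variable {At : Type} {Act : Type} {X : Type} {Y : Type} {Z : Type}

/-- Skip-free GKAT expressions; tests are represented as Boolean predicates on atoms. -/
inductive GExp (At Act : Type) : Type
  | zero : GExp At Act
  | act : Act → GExp At Act
  | add : (At → Bool) → GExp At Act → GExp At Act → GExp At Act
  | seq : GExp At Act → GExp At Act → GExp At Act
  | loop : (At → Bool) → GExp At Act → GExp At Act → GExp At Act

/-- The Brzozowski-style small-step semantics (derivative) of skip-free GKAT expressions.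
`none` is the failure output ⊥, `some (p, none)` is acceptance with action `p`,
and `some (p, some e')` is a transition to `e'` with action `p`. -/
def gderiv : GExp At Act → At → Option (Act × Option (GExp At Act))
  | .zero, _ => none
  | .act p, _ => some (p, none)
  | .add b e f, α => if b α then gderiv e α else gderiv f α
  | .seq e f, α =>
      match gderiv e α with
      | none => none
      | some (p, none) => some (p, some f)
      | some (p, some e') => some (p, some (.seq e' f))
  | .loop b e f, α =>
      if b α then
        match gderiv e α with
        | none => none
        | some (p, none) => some (p, some (.loop b e f))
        | some (p, some e') => some (p, some (.seq e' (.loop b e f)))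
      else gderiv f α

/-- A skip-free automaton structure on `X`. -/
abbrev SFA (At Act X : Type) := X → At → Option (Act × Option X)

/-- Acceptance of a guarded trace (a nonempty list of atom/action pairs) from a state. -/
inductive Accepts (h : SFA At Act X) : X → List (At × Act) → Prop
  | last {x α p} : h x α = some (p, none) → Accepts h x [(α, p)]
  | step {x α p x' w} : h x α = some (p, some x') → Accepts h x' w →
      Accepts h x ((α, p) :: w)

/-- The language of guarded traces accepted by a state of a skip-free automaton. -/
def Lang (h : SFA At Act X) (x : X) : Set (List (At × Act)) := {w | Accepts h x w}

/-- Bisimulations between skip-free automata. -/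
def IsSFBisim (h : SFA At Act X) (k : SFA At Act Y) (R : X → Y → Prop) : Prop :=
  ∀ ⦃x y⦄, R x y → ∀ α : At,
    (h x α = none ↔ k y α = none) ∧
    (∀ p : Act, h x α = some (p, none) ↔ k y α = some (p, none)) ∧
    (∀ (p : Act) (x' : X), h x α = some (p, some x') →
      ∃ y' : Y, k y α = some (p, some y') ∧ R x' y')

/-- Bisimilarity of states of skip-free automata. -/
def SFBisimilar (h : SFA At Act X) (k : SFA At Act Y) (x : X) (y : Y) : Prop :=
  ∃ R, IsSFBisim h k R ∧ R x y

/-- A guarded string `α₁p₁⋯pₙαₙ₊₁` represented as a list of atom/action pairs together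
with a trailing atom. -/
abbrev GS (At Act : Type) := List (At × Act) × At

/-- The first atom of a guarded string. -/
def fstAtom : GS At Act → At
  | ([], β) => β
  | ((α, _) :: _, _) => α

/-- The fused composition `L ⋄ K` of guarded-string languages. -/
def diam (L K : Set (GS At Act)) : Set (GS At Act) :=
  {g | ∃ (u : List (At × Act)) (v : List (At × Act)) (β : At),
        (u, fstAtom (v, β)) ∈ L ∧ (v, β) ∈ K ∧ g = (u ++ v, β)}

/-- The guarded-string language of a test: the atoms satisfying it. -/
def atomsOf (b : At → Bool) : Set (GS At Act) :=
  {g | ∃ α : At, b α = true ∧ g = ([], α)}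

/-- Iterated fused composition, `L^(0) = At`, `L^(n+1) = L ⋄ L^(n)`. -/
def dpow (L : Set (GS At Act)) : ℕ → Set (GS At Act)
  | 0 => atomsOf fun _ => true
  | n + 1 => diam L (dpow L n)

/-- `L^(*) = ⋃ₙ L^(n)`. -/
def dstar (L : Set (GS At Act)) : Set (GS At Act) := ⋃ n : ℕ, dpow L n

/-- The GKAT language semantics `L̂` of a skip-free expression, reading `e₁^(b)e₂` as
`e₁^(b)·e₂`. -/
def Lhat : GExp At Act → Set (GS At Act)
  | .zero => ∅
  | .act p => {g | ∃ α β : At, g = ([(α, p)], β)}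
  | .add b e f => diam (atomsOf b) (Lhat e) ∪ diam (atomsOf fun α => !b α) (Lhat f)
  | .seq e f => diam (Lhat e) (Lhat f)
  | .loop b e f =>
      diam (diam (dstar (diam (atomsOf b) (Lhat e))) (atomsOf fun α => !b α)) (Lhat f)

/-! ### Auxiliary definitions and lemmas -/

/-- Append an arbitrary trailing atom to each trace of `L`. -/
def tr (L : Set (List (At × Act))) : Set (GS At Act) :=
  {g | ∃ w β, w ∈ L ∧ g = (w, β)}

lemma mem_tr {L : Set (List (At × Act))} {w : List (At × Act)} {β : At} :
    (w, β) ∈ tr L ↔ w ∈ L := by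
  constructor
  · rintro ⟨u, γ, hu, h⟩
    rw [Prod.mk.injEq] at h
    exact h.1 ▸ hu
  · exact fun h => ⟨w, β, h, rfl⟩

def catSet (L K : Set (List (At × Act))) : Set (List (At × Act)) :=
  {w | ∃ u v, u ∈ L ∧ v ∈ K ∧ w = u ++ v}

def cpow (M : Set (List (At × Act))) : ℕ → Set (List (At × Act))
  | 0 => {[]}
  | n + 1 => catSet M (cpow M n)

def cstar (M : Set (List (At × Act))) : Set (List (At × Act)) := ⋃ n, cpow M n

/-- Boolean test on the first atom of a trace (false on the empty trace). -/
def hB (b : At → Bool) : List (At × Act) → Bool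
  | [] => false
  | (α, _) :: _ => b α

lemma cons_mem_cstar {M : Set (List (At × Act))} {s u : List (At × Act)}
    (hs : s ∈ M) (hu : u ∈ cstar M) : s ++ u ∈ cstar M := by
  obtain ⟨m, hm⟩ := Set.mem_iUnion.mp hu
  exact Set.mem_iUnion.mpr ⟨m + 1, s, u, hs, hm, rfl⟩

lemma diam_tr_tr (L K : Set (List (At × Act))) :
    diam (tr L) (tr K) = tr (catSet L K) := by
  ext ⟨w, β⟩
  constructor
  · rintro ⟨u, v, γ, hu, hv, hg⟩
    rw [Prod.mk.injEq] at hg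
    obtain ⟨rfl, rfl⟩ := hg
    exact mem_tr.mpr ⟨u, v, mem_tr.mp hu, mem_tr.mp hv, rfl⟩
  · intro h
    obtain ⟨u, v, hu, hv, rfl⟩ := mem_tr.mp h
    exact ⟨u, v, β, mem_tr.mpr hu, mem_tr.mpr hv, rfl⟩

lemma diam_atoms_tr (b : At → Bool) (K : Set (List (At × Act)))
    (hK : ∀ w ∈ K, w ≠ []) :
    diam (atomsOf b) (tr K) = tr {w | w ∈ K ∧ hB b w = true} := by
  ext ⟨w, β⟩
  constructor
  · rintro ⟨u, v, γ, hu, hv, hg⟩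
    obtain ⟨α, hα, he⟩ := hu
    rw [Prod.mk.injEq] at he
    obtain ⟨rfl, hfa⟩ := he
    rw [Prod.mk.injEq] at hg
    obtain ⟨rfl, rfl⟩ := hg
    have hv' := mem_tr.mp hv
    refine mem_tr.mpr ⟨by simpa using hv', ?_⟩
    obtain ⟨⟨δ, q⟩, t, rfl⟩ := List.exists_cons_of_ne_nil (hK _ hv')
    simp only [fstAtom] at hfa
    simp [hB, hfa, hα]
  · intro h
    obtain ⟨hw, hb⟩ := mem_tr.mp h
    obtain ⟨⟨δ, q⟩, t, rfl⟩ := List.exists_cons_of_ne_nil (hK _ hw)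
    refine ⟨[], (δ, q) :: t, β, ⟨δ, by simpa [hB] using hb, ?_⟩, mem_tr.mpr hw, rfl⟩
    simp [fstAtom]

lemma diam_atoms_right (S : Set (GS At Act)) (c : At → Bool) :
    diam S (atomsOf c) = {g | g ∈ S ∧ c g.2 = true} := by
  ext ⟨w, β⟩
  constructor
  · rintro ⟨u, v, γ, hu, hv, hg⟩
    obtain ⟨α, hα, he⟩ := hv
    rw [Prod.mk.injEq] at he
    obtain ⟨rfl, rfl⟩ := he
    rw [Prod.mk.injEq] at hg
    obtain ⟨rfl, rfl⟩ := hg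
    constructor
    · simpa [fstAtom] using hu
    · exact hα
  · rintro ⟨hS, hc⟩
    exact ⟨w, [], β, by simpa [fstAtom] using hS, ⟨β, hc, rfl⟩, by simp⟩

lemma diam_filter (T : Set (List (At × Act))) (c : At → Bool)
    (K : Set (List (At × Act))) (hK : ∀ w ∈ K, w ≠ []) :
    diam {g | g ∈ tr T ∧ c g.2 = true} (tr K) =
      tr {w | ∃ u v, u ∈ T ∧ v ∈ K ∧ hB c v = true ∧ w = u ++ v} := by
  ext ⟨w, β⟩
  constructor
  · rintro ⟨u, v, γ, ⟨hu, hc⟩, hv, hg⟩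
    rw [Prod.mk.injEq] at hg
    obtain ⟨rfl, rfl⟩ := hg
    have hv' := mem_tr.mp hv
    have hu' := mem_tr.mp hu
    refine mem_tr.mpr ⟨u, v, hu', hv', ?_, rfl⟩
    obtain ⟨⟨δ, q⟩, t, rfl⟩ := List.exists_cons_of_ne_nil (hK _ hv')
    simpa [hB, fstAtom] using hc
  · intro h
    obtain ⟨u, v, hu, hv, hc, rfl⟩ := mem_tr.mp h
    obtain ⟨⟨δ, q⟩, t, rfl⟩ := List.exists_cons_of_ne_nil (hK _ hv)
    exact ⟨u, _, β, ⟨mem_tr.mpr hu, by simpa [hB, fstAtom] using hc⟩,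
      mem_tr.mpr hv, rfl⟩

lemma atomsOf_true : (atomsOf (fun _ => true) : Set (GS At Act)) = tr {[]} := by
  ext ⟨w, β⟩
  simp only [atomsOf, tr, Set.mem_setOf_eq, Set.mem_singleton_iff, Prod.mk.injEq]
  aesop

lemma dpow_tr (M : Set (List (At × Act))) (n : ℕ) :
    dpow (tr M) n = tr (cpow M n) := by
  induction n with
  | zero => exact atomsOf_true
  | succ n ih =>
    show diam (tr M) (dpow (tr M) n) = tr (catSet M (cpow M n))
    rw [ih, diam_tr_tr]

lemma dstar_tr (M : Set (List (At × Act))) : dstar (tr M) = tr (cstar M) := by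
  ext ⟨w, β⟩
  simp only [dstar, Set.mem_iUnion, dpow_tr, mem_tr, cstar]

lemma tr_union (A B : Set (List (At × Act))) : tr (A ∪ B) = tr A ∪ tr B := by
  ext ⟨w, β⟩
  simp only [Set.mem_union, mem_tr]

lemma tr_empty : (tr (∅ : Set (List (At × Act))) : Set (GS At Act)) = ∅ := by
  ext ⟨w, β⟩
  simp [mem_tr]

/-! ### Acceptance lemmas -/

lemma accepts_ne_nil {h : SFA At Act X} {x : X} {w : List (At × Act)}
    (ha : Accepts h x w) : w ≠ [] := by
  cases ha <;> simp

lemma accepts_congr {h : SFA At Act X} {x y : X} {α : At} (hxy : h x α = h y α)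
    {p : Act} {t : List (At × Act)} :
    Accepts h x ((α, p) :: t) ↔ Accepts h y ((α, p) :: t) := by
  constructor <;> intro ha
  · cases ha with
    | last hd => exact Accepts.last (by rw [← hxy]; exact hd)
    | step hd ht => exact Accepts.step (by rw [← hxy]; exact hd) ht
  · cases ha with
    | last hd => exact Accepts.last (by rw [hxy]; exact hd)
    | step hd ht => exact Accepts.step (by rw [hxy]; exact hd) ht

lemma accepts_zero {w : List (At × Act)} :
    ¬ Accepts gderiv (GExp.zero : GExp At Act) w := by
  intro ha
  cases ha <;> simp_all [gderiv]

lemma accepts_act {p : Act} {w : List (At × Act)} :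
    Accepts gderiv (GExp.act p : GExp At Act) w ↔ ∃ α : At, w = [(α, p)] := by
  constructor
  · intro ha
    cases ha with
    | last hd =>
      simp only [gderiv, Option.some.injEq, Prod.mk.injEq] at hd
      exact ⟨_, by rw [hd.1]⟩
    | step hd ht => simp [gderiv] at hd
  · rintro ⟨α, rfl⟩
    exact Accepts.last (by simp [gderiv])

lemma accepts_add {b : At → Bool} {e f : GExp At Act} {α : At} {p : Act}
    {t : List (At × Act)} :
    Accepts gderiv (GExp.add b e f) ((α, p) :: t) ↔
      (if b α then Accepts gderiv e ((α, p) :: t)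
       else Accepts gderiv f ((α, p) :: t)) := by
  by_cases hb : b α
  · simp only [hb, if_true]
    exact accepts_congr (by simp [gderiv, hb])
  · simp only [hb, if_false]
    exact accepts_congr (by simp [gderiv, hb])

lemma accepts_seq_fwd {f : GExp At Act} :
    ∀ (w : List (At × Act)) (e : GExp At Act), Accepts gderiv (GExp.seq e f) w →
      ∃ u v, Accepts gderiv e u ∧ Accepts gderiv f v ∧ w = u ++ v
  | [], _, ha => absurd rfl (accepts_ne_nil ha)
  | (α, p) :: t, e, ha => by
    cases ha with
    | last hd =>
      exfalso
      cases he : gderiv e α with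
      | none => simp [gderiv, he] at hd
      | some pe =>
        obtain ⟨q, oe⟩ := pe
        cases oe <;> simp [gderiv, he] at hd
    | step hd ht =>
      cases he : gderiv e α with
      | none => simp [gderiv, he] at hd
      | some pe =>
        obtain ⟨q, oe⟩ := pe
        cases oe with
        | none =>
          simp only [gderiv, he, Option.some.injEq, Prod.mk.injEq] at hd
          obtain ⟨rfl, hf⟩ := hd
          subst hf
          exact ⟨[(α, q)], t, Accepts.last he, ht, rfl⟩
        | some e' =>
          simp only [gderiv, he, Option.some.injEq, Prod.mk.injEq] at hd
          obtain ⟨rfl, hf⟩ := hd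
          subst hf
          obtain ⟨u, v, hu, hv, rfl⟩ := accepts_seq_fwd t e' ht
          exact ⟨(α, q) :: u, v, Accepts.step he hu, hv, rfl⟩

lemma accepts_seq_bwd {e f : GExp At Act} {u v : List (At × Act)}
    (hu : Accepts gderiv e u) (hv : Accepts gderiv f v) :
    Accepts gderiv (GExp.seq e f) (u ++ v) := by
  induction hu with
  | last hd => exact Accepts.step (by simp [gderiv, hd]) hv
  | step hd ht ih => exact Accepts.step (by simp [gderiv, hd]) ih

lemma accepts_loop_false {b : At → Bool} {e f : GExp At Act} {α : At} {p : Act}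
    {t : List (At × Act)} (hb : b α = false) :
    Accepts gderiv (GExp.loop b e f) ((α, p) :: t) ↔
      Accepts gderiv f ((α, p) :: t) :=
  accepts_congr (by simp [gderiv, hb])

lemma accepts_loop_append {b : At → Bool} {e f : GExp At Act}
    {u r : List (At × Act)} (hu : Accepts gderiv e u) (hb : hB b u = true)
    (hr : Accepts gderiv (GExp.loop b e f) r) :
    Accepts gderiv (GExp.loop b e f) (u ++ r) := by
  cases hu with
  | @last _ α p hd =>
    simp only [hB] at hb
    exact Accepts.step (by simp [gderiv, hb, hd]) hr
  | @step _ α p e' s hd ht =>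
    simp only [hB] at hb
    exact Accepts.step (by simp [gderiv, hb, hd]) (accepts_seq_bwd ht hr)

def loopSet (b : At → Bool) (e f : GExp At Act) : Set (List (At × Act)) :=
  {w | ∃ u v, u ∈ cstar {s | s ∈ Lang gderiv e ∧ hB b s = true} ∧
        v ∈ Lang gderiv f ∧ hB b v = false ∧ w = u ++ v}

lemma accepts_loop_fwd {b : At → Bool} {e f : GExp At Act} :
    ∀ (n : ℕ) (w : List (At × Act)), w.length ≤ n →
      Accepts gderiv (GExp.loop b e f) w → w ∈ loopSet b e f := by
  intro n
  induction n with
  | zero =>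
    intro w hw ha
    exact absurd (List.eq_nil_of_length_eq_zero (Nat.le_zero.mp hw))
      (accepts_ne_nil ha)
  | succ n ih =>
    intro w hw ha
    simp only [loopSet, Set.mem_setOf_eq]
    obtain ⟨⟨α, p⟩, t, rfl⟩ := List.exists_cons_of_ne_nil (accepts_ne_nil ha)
    by_cases hb : b α
    · cases ha with
      | last hd =>
        exfalso
        cases he : gderiv e α with
        | none => simp [gderiv, hb, he] at hd
        | some pe =>
          obtain ⟨q, oe⟩ := pe
          cases oe <;> simp [gderiv, hb, he] at hd
      | step hd ht =>
        cases he : gderiv e α with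
        | none => simp [gderiv, hb, he] at hd
        | some pe =>
          obtain ⟨q, oe⟩ := pe
          cases oe with
          | none =>
            simp only [gderiv, hb, if_true, he, Option.some.injEq,
              Prod.mk.injEq] at hd
            obtain ⟨rfl, hf⟩ := hd
            subst hf
            have hlen : t.length ≤ n := by
              simpa using Nat.succ_le_succ_iff.mp (by simpa using hw)
            obtain ⟨u, v, hu, hv, hvb, rfl⟩ := ih t hlen ht
            refine ⟨(α, q) :: u, v, ?_, hv, hvb, by simp⟩
            refine cons_mem_cstar (s := [(α, q)]) ?_ hu
            exact ⟨Accepts.last he, by simp [hB, hb]⟩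
          | some e' =>
            simp only [gderiv, hb, if_true, he, Option.some.injEq,
              Prod.mk.injEq] at hd
            obtain ⟨rfl, hf⟩ := hd
            subst hf
            obtain ⟨s, r, hs, hr, rfl⟩ := accepts_seq_fwd t e' ht
            have hlen : r.length ≤ n := by
              simp only [List.length_cons, List.length_append] at hw
              omega
            obtain ⟨u, v, hu, hv, hvb, rfl⟩ := ih r hlen hr
            refine ⟨(α, q) :: s ++ u, v, ?_, hv, hvb, by simp⟩
            refine cons_mem_cstar (s := (α, q) :: s) ?_ hu
            exact ⟨Accepts.step he hs, by simp [hB, hb]⟩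
    · rw [accepts_loop_false (Bool.not_eq_true _ ▸ hb)] at ha
      refine ⟨[], (α, p) :: t, Set.mem_iUnion.mpr ⟨0, ?_⟩, ha,
        by simp [hB, hb], by simp⟩
      simp [cpow]

lemma accepts_loop_bwd {b : At → Bool} {e f : GExp At Act} {v : List (At × Act)}
    (hv : Accepts gderiv f v) (hvb : hB b v = false) :
    ∀ (m : ℕ) (u : List (At × Act)),
      u ∈ cpow {s | s ∈ Lang gderiv e ∧ hB b s = true} m →
      Accepts gderiv (GExp.loop b e f) (u ++ v) := by
  intro m
  induction m with
  | zero =>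
    intro u hu
    simp only [cpow, Set.mem_singleton_iff] at hu
    subst hu
    obtain ⟨⟨α, p⟩, t, rfl⟩ := List.exists_cons_of_ne_nil (accepts_ne_nil hv)
    simp only [List.nil_append]
    rw [accepts_loop_false (by simpa [hB] using hvb)]
    exact hv
  | succ m ih =>
    rintro u ⟨s, u', ⟨hs, hsb⟩, hu', rfl⟩
    rw [List.append_assoc]
    exact accepts_loop_append hs hsb (ih u' hu')

lemma accepts_loop_iff {b : At → Bool} {e f : GExp At Act} {w : List (At × Act)} :
    Accepts gderiv (GExp.loop b e f) w ↔ w ∈ loopSet b e f := by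
  constructor
  · exact accepts_loop_fwd w.length w le_rfl
  · rintro ⟨u, v, hu, hv, hvb, rfl⟩
    obtain ⟨m, hm⟩ := Set.mem_iUnion.mp hu
    exact accepts_loop_bwd hv hvb m u hm

lemma lang_ne_nil (e : GExp At Act) : ∀ w ∈ Lang gderiv e, w ≠ [] :=
  fun _ hw => accepts_ne_nil hw

/-- the GKAT language semantics of a skip-free expression is its skip-free
language with an arbitrary trailing atom appended: `L̂(e) = L(e)·At`. -/
theorem lhat_eq_lang_at (e : GExp At Act) :
    Lhat e = {g : GS At Act | ∃ (w : List (At × Act)) (β : At),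
      w ∈ Lang gderiv e ∧ g = (w, β)} := by
  show Lhat e = tr (Lang gderiv e)
  induction e with
  | zero =>
    have : Lang (gderiv (At := At) (Act := Act)) GExp.zero = ∅ := by
      ext w; simpa [Lang] using accepts_zero (w := w)
    rw [Lhat, this, tr_empty]
  | act p =>
    have : Lang (gderiv (At := At)) (GExp.act p) = {w | ∃ α : At, w = [(α, p)]} := by
      ext w; exact accepts_act
    rw [Lhat, this]
    ext ⟨w, β⟩
    simp only [Set.mem_setOf_eq, mem_tr, Prod.mk.injEq]
    aesop
  | add b e f ihe ihf =>
    have ihe' : Lhat e = tr (Lang gderiv e) := ihe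
    have ihf' : Lhat f = tr (Lang gderiv f) := ihf
    have hL : Lang gderiv (GExp.add b e f) =
        {w | w ∈ Lang gderiv e ∧ hB b w = true} ∪
        {w | w ∈ Lang gderiv f ∧ hB (fun α => !b α) w = true} := by
      ext w
      cases w with
      | nil =>
        simp only [Lang, Set.mem_setOf_eq, Set.mem_union, hB]
        constructor
        · intro ha; exact absurd rfl (accepts_ne_nil ha)
        · rintro (⟨_, h⟩ | ⟨_, h⟩) <;> simp at h
      | cons hd tl =>
        obtain ⟨α, p⟩ := hd
        simp only [Lang, Set.mem_setOf_eq, Set.mem_union, hB]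
        rw [accepts_add]
        by_cases hb : b α <;> simp [hb]
    rw [Lhat, ihe', ihf', diam_atoms_tr _ _ (lang_ne_nil e),
      diam_atoms_tr _ _ (lang_ne_nil f), ← tr_union, hL]
  | seq e f ihe ihf =>
    have ihe' : Lhat e = tr (Lang gderiv e) := ihe
    have ihf' : Lhat f = tr (Lang gderiv f) := ihf
    have hL : Lang gderiv (GExp.seq e f) =
        catSet (Lang gderiv e) (Lang gderiv f) := by
      ext w
      constructor
      · intro ha
        obtain ⟨u, v, hu, hv, rfl⟩ := accepts_seq_fwd w e ha
        exact ⟨u, v, hu, hv, rfl⟩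
      · rintro ⟨u, v, hu, hv, rfl⟩
        exact accepts_seq_bwd hu hv
    rw [Lhat, ihe', ihf', diam_tr_tr, hL]
  | loop b e f ihe ihf =>
    have ihe' : Lhat e = tr (Lang gderiv e) := ihe
    have ihf' : Lhat f = tr (Lang gderiv f) := ihf
    have hL : Lang gderiv (GExp.loop b e f) = loopSet b e f := by
      ext w; exact accepts_loop_iff
    rw [Lhat, ihe', ihf', diam_atoms_tr _ _ (lang_ne_nil e), dstar_tr,
      diam_atoms_right,
      diam_filter (cstar {w | w ∈ Lang gderiv e ∧ hB b w = true})
        (fun α => !b α) (Lang gderiv f) (lang_ne_nil f), hL]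
    have hset : {w | ∃ u v, u ∈ cstar {w | w ∈ Lang gderiv e ∧ hB b w = true} ∧
        v ∈ Lang gderiv f ∧ hB (fun α => !b α) v = true ∧ w = u ++ v} =
        loopSet b e f := by
      ext w
      simp only [loopSet, Set.mem_setOf_eq]
      constructor
      · rintro ⟨u, v, hu, hv, hc, rfl⟩
        refine ⟨u, v, hu, hv, ?_, rfl⟩
        obtain ⟨⟨δ, q⟩, t, rfl⟩ := List.exists_cons_of_ne_nil (accepts_ne_nil hv)
        simpa [hB] using hc
      · rintro ⟨u, v, hu, hv, hc, rfl⟩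
        refine ⟨u, v, hu, hv, ?_, rfl⟩
        obtain ⟨⟨δ, q⟩, t, rfl⟩ := List.exists_cons_of_ne_nil (accepts_ne_nil hv)
        simpa [hB] using hc
    rw [hset]
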